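/- Queue congruence preserves per-pair message subsequences: if two queue types Q and Q' are congruent (related by the reflexive-transitive-symmetric closure of swapping adjacent entries p₁→q₁:ℓ₁⟨A₁⟩ and p₂→q₂:ℓ₂⟨A₂⟩ whenever p₁ ≠ p₂ or q₁ ≠ q₂), then for every ordered pair of roles (p, q), the subsequence of Q consisting of entries with sender p and receiver q equals the corresponding subsequence of Q'. -/

import Mathlib

/- Queue types of the Maty multiparty session type system.  A queue type is a
list of entries `p→q:ℓ⟨A⟩` (sender, receiver, label, payload type).  Queue
congruence is generated by swapping adjacent entries whose (sender, receiver)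
pairs differ, closed under reflexivity, symmetry and transitivity. -/

abbrev Role := ℕ
abbrev Label := ℕ
abbrev Ty := ℕ

structure QEntry where
  sender : Role
  receiver : Role
  label : Label
  payload : Ty
deriving DecidableEq

abbrev Queue := List QEntry

/-- One swap of adjacent entries with distinct (sender, receiver) pairs. -/
inductive QSwap : Queue → Queue → Prop
  | swap (Q₁ Q₂ : Queue) (e₁ e₂ : QEntry)
      (h : e₁.sender ≠ e₂.sender ∨ e₁.receiver ≠ e₂.receiver) :
      QSwap (Q₁ ++ e₁ :: e₂ :: Q₂) (Q₁ ++ e₂ :: e₁ :: Q₂)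

/-- Queue congruence: reflexive-symmetric-transitive closure of `QSwap`. -/
def QCong : Queue → Queue → Prop := Relation.EqvGen QSwap

/-- The subsequence of entries sent from `p` to `q`, in order. -/
def pairFilter (p q : Role) (Q : Queue) : Queue :=
  Q.filter (fun e => decide (e.sender = p ∧ e.receiver = q))

theorem List.filter_append_cons_cons_comm {α : Type*} (P : α → Bool) (l₁ l₂ : List α) {a b : α}
    (h : ¬(P a ∧ P b)) :
    (l₁ ++ a :: b :: l₂).filter P = (l₁ ++ b :: a :: l₂).filter P := by
  cases ha : P a <;> cases hb : P b <;> simp_all [List.filter_append]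

theorem QSwap.pairFilter_eq {Q Q' : Queue} (h : QSwap Q Q') (p q : Role) :
    pairFilter p q Q = pairFilter p q Q' := by
  obtain ⟨Q₁, Q₂, e₁, e₂, hne⟩ := h
  refine List.filter_append_cons_cons_comm _ Q₁ Q₂ ?_
  simp only [decide_eq_true_eq]
  rintro ⟨⟨hs₁, hr₁⟩, hs₂, hr₂⟩
  exact hne.elim (· (hs₁.trans hs₂.symm)) (· (hr₁.trans hr₂.symm))

/-- queue congruence preserves the per-pair subsequence of messages
for every ordered pair of roles. -/
theorem qcong_pairFilter (Q Q' : Queue) (h : QCong Q Q') :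
    ∀ p q : Role, pairFilter p q Q = pairFilter p q Q' :=
  fun p q => Setoid.eqvGen_le (r := QSwap) (s := Setoid.ker (pairFilter p q))
    (fun _ _ hswap => hswap.pairFilter_eq p q) h
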